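/- Let F be a tract with involution and 𝓥 ⊆ F^E an orthogonal F-vector set. Then the set of support bases of 𝓥 is the collection of bases of an orthogonal matroid on E, and the set of supports of elementary vectors of 𝓥 equals the set of circuits of that orthogonal matroid. -/
import Mathlib


open scoped Classical

/-- The ground set `E = [n] ∪ [n]*`: `(i, true)` encodes `i ∈ [n]` and `(i, false)` encodes
`i* ∈ [n]*`. -/
abbrev OE (n : ℕ) := Fin n × Bool

/-- The involution `* : E → E`. -/
def ostar {n : ℕ} (x : OE n) : OE n := (x.1, !x.2)

/-- The divergence `{x, x*}`. -/
def pairS {n : ℕ} (x : OE n) : Finset (OE n) := {x, ostar x}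

/-- `A` is admissible (a subtransversal): `A ∩ A* = ∅`. -/
def IsAdmissible {n : ℕ} (A : Finset (OE n)) : Prop := ∀ x ∈ A, ostar x ∉ A

/-- A transversal: an admissible set of size `n`. -/
def IsTransversal {n : ℕ} (T : Finset (OE n)) : Prop := T.card = n ∧ IsAdmissible T

/-- `𝓑` is the set of bases of an orthogonal matroid on `E = [n] ∪ [n]*`: a nonempty
collection of transversals satisfying the symmetric exchange axiom. -/
def IsOrthoMatroid {n : ℕ} (𝓑 : Set (Finset (OE n))) : Prop :=
  𝓑.Nonempty ∧ (∀ B ∈ 𝓑, IsTransversal B) ∧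
  ∀ B₁ ∈ 𝓑, ∀ B₂ ∈ 𝓑, ∀ x : OE n,
    x ∈ symmDiff B₁ B₂ → ostar x ∈ symmDiff B₁ B₂ →
    ∃ y : OE n, y ∈ symmDiff B₁ B₂ ∧ ostar y ∈ symmDiff B₁ B₂ ∧
      pairS y ≠ pairS x ∧ symmDiff B₁ (pairS x ∪ pairS y) ∈ 𝓑

/-- An admissible set is independent if it is contained in some basis. -/
def IsIndep {n : ℕ} (𝓑 : Set (Finset (OE n))) (I : Finset (OE n)) : Prop := ∃ B ∈ 𝓑, I ⊆ B

/-- A circuit: a minimal dependent admissible set. -/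
def IsCircuit {n : ℕ} (𝓑 : Set (Finset (OE n))) (C : Finset (OE n)) : Prop :=
  IsAdmissible C ∧ ¬ IsIndep 𝓑 C ∧ ∀ D ⊂ C, IsIndep 𝓑 D

/-- A tract structure on a pointed commutative group `F = F^× ∪ {0}`: the null set `N` is a set
of multisets of nonzero elements of `F` (a multiset encodes a formal `ℕ`-linear combination of
elements of the group `F^×`, i.e. an element of the group semiring `ℕ[F^×]`). -/
structure TractOn (F : Type) [CommGroupWithZero F] where
  /-- The null set `N_F ⊆ ℕ[F^×]`. -/
  N : Set (Multiset F)
  /-- Members of `N_F` are formal sums of elements of `F^× = F \ {0}`. -/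
  not_zero_mem : ∀ S ∈ N, (0 : F) ∉ S
  /-- (T1) `0 ∈ N_F`. -/
  zero_mem : (0 : Multiset F) ∈ N
  /-- (T2) `1 ∉ N_F`. -/
  one_not_mem : ({1} : Multiset F) ∉ N
  /-- (T3) there is a unique `ε ∈ F^×` with `1 + ε ∈ N_F`. -/
  eps_exists : ∃! ε : F, ε ≠ 0 ∧ ({1, ε} : Multiset F) ∈ N
  /-- (T4) `N_F` is closed under multiplication by elements of `F^×`. -/
  smul_mem : ∀ g : F, g ≠ 0 → ∀ S ∈ N, Multiset.map (fun a => g * a) S ∈ N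

/-- The distinguished element `ε` (playing the role of `-1`) of a tract. -/
noncomputable def TractOn.eps {F : Type} [CommGroupWithZero F] (t : TractOn F) : F :=
  t.eps_exists.exists.choose

/-- A formal sum of (possibly zero) elements of `F` "sums to zero" in the tract `t`:
after discarding zero summands it lies in the null set. -/
def TractOn.Null {F : Type} [CommGroupWithZero F] (t : TractOn F) (S : Multiset F) : Prop :=
  Multiset.filter (fun x => x ≠ 0) S ∈ t.N

/-- The support of a vector `X ∈ F^E`. -/
noncomputable def suppV {n : ℕ} {F : Type} [Zero F] (X : OE n → F) : Finset (OE n) :=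
  Finset.univ.filter (fun e => X e ≠ 0)

/-- `X*`, defined by `X*(i) = X(i*)`. -/
def starV {n : ℕ} {F : Type} (X : OE n → F) : OE n → F := fun e => X (ostar e)

/-- `conj(X)`: apply the involution `σ` on the `[n]*`-coordinates only. -/
def conjV {n : ℕ} {F : Type} (σ : F → F) (X : OE n → F) : OE n → F :=
  fun e => if e.2 = true then X e else σ (X e)

/-- The formal sum of the `2n` terms of the inner product
`⟨X, Y⟩ = Σ_{i ∈ [n]} (X(i)·σ(Y(i)) + σ(X(i*))·Y(i*))`. -/
def innerTerms {n : ℕ} {F : Type} [Mul F] (σ : F → F) (X Y : OE n → F) : Multiset F :=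
  (Multiset.map (fun i : Fin n => X (i, true) * σ (Y (i, true))) Finset.univ.val) +
  (Multiset.map (fun i : Fin n => σ (X (i, false)) * Y (i, false)) Finset.univ.val)

/-- `X ⊥ Y` in the tract `t`: the inner product `⟨X, Y⟩` lies in the null set. -/
def OrthPair {n : ℕ} {F : Type} [CommGroupWithZero F] (t : TractOn F) (σ : F → F)
    (X Y : OE n → F) : Prop :=
  t.Null (innerTerms σ X Y)

/-- `σ` is an involution of the tract `t`. -/
structure IsTractInvol {F : Type} [CommGroupWithZero F] (t : TractOn F) (σ : F → F) :
    Prop where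
  invol : ∀ x, σ (σ x) = x
  map_one : σ 1 = 1
  map_mul : ∀ x y, σ (x * y) = σ x * σ y
  map_zero : σ (0 : F) = 0
  map_null : ∀ S ∈ t.N, Multiset.map σ S ∈ t.N

/-- `𝓒 ⊆ F^E` is an `F`-signature of the orthogonal matroid with bases `𝓑`: the supports of
its members are exactly the circuits, and it is closed under scaling by `F^×`. -/
def IsSignature {n : ℕ} {F : Type} [CommGroupWithZero F] (𝓑 : Set (Finset (OE n)))
    (𝓒 : Set (OE n → F)) : Prop :=
  (∀ X ∈ 𝓒, IsCircuit 𝓑 (suppV X)) ∧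
  (∀ C : Finset (OE n), IsCircuit 𝓑 C → ∃ X ∈ 𝓒, suppV X = C) ∧
  (∀ X ∈ 𝓒, ∀ α : F, α ≠ 0 → (fun e => α * X e) ∈ 𝓒)

/-- The 2-term orthogonality (O₂): `⟨X, Y*⟩ ∈ N_F` whenever `|supp X ∩ (supp Y)*| = 2`. -/
def TwoTermOrth {n : ℕ} {F : Type} [CommGroupWithZero F] (t : TractOn F) (σ : F → F)
    (𝓒 : Set (OE n → F)) : Prop :=
  ∀ X ∈ 𝓒, ∀ Y ∈ 𝓒, (suppV X ∩ (suppV Y).image ostar).card = 2 →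
    OrthPair t σ X (starV Y)

/-- `X` is elementary in `𝓦 ⊆ F^E`: it is a nonzero member of `𝓦` with admissible support
which is minimal among the supports of nonzero members of `𝓦`. -/
def IsElem {n : ℕ} {F : Type} [Zero F] (𝓦 : Set (OE n → F)) (X : OE n → F) : Prop :=
  X ∈ 𝓦 ∧ X ≠ 0 ∧ IsAdmissible (suppV X) ∧
  ∀ Y ∈ 𝓦, Y ≠ 0 → suppV Y ⊆ suppV X → suppV Y = suppV X

/-- A transversal `B` is a support basis of `𝓥` if no nonzero member of `𝓥` has support
contained in `B`. -/
def IsSupportBasis {n : ℕ} {F : Type} [Zero F] (𝓥 : Set (OE n → F))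
    (B : Finset (OE n)) : Prop :=
  IsTransversal B ∧ ∀ X ∈ 𝓥, X ≠ 0 → ¬ suppV X ⊆ B

/-- A fundamental circuit form for `𝓥` with respect to a support basis `B`:
for each `e ∈ B*` (equivalently `e ∉ B`), a vector `Xf e ∈ 𝓥` supported in `B △ {e,e*}`
with `Xf e e = 1`. -/
def IsFCF {n : ℕ} {F : Type} [Zero F] [One F] (𝓥 : Set (OE n → F)) (B : Finset (OE n))
    (Xf : OE n → (OE n → F)) : Prop :=
  ∀ e : OE n, e ∉ B → Xf e ∈ 𝓥 ∧ suppV (Xf e) ⊆ symmDiff B (pairS e) ∧ Xf e e = 1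

/-- `X` lies in the linear span (over the tract `t`) of the family `V` indexed by `S`:
there are coefficients `c` with `Σ_{i ∈ S} c_i V_i − X ∈ (N_F)^E` (here `-1` is `t.eps`). -/
noncomputable def InSpanOver {n : ℕ} {F : Type} [CommGroupWithZero F] (t : TractOn F)
    (S : Finset (OE n)) (V : OE n → (OE n → F)) (X : OE n → F) : Prop :=
  ∃ c : OE n → F, ∀ e : OE n,
    t.Null (Multiset.map (fun i => c i * V i e) S.val + {t.eps * X e})

/-- `𝓥 ⊆ F^E` is an orthogonal `F`-vector set: (V1) elementary vectors with small support
intersection are orthogonal; (V2) support bases exist and admit fundamental circuit forms;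
(V3) `𝓥` is exactly the set of vectors `X` such that for every support basis `B` and
fundamental circuit form `Xf`, `conj(X)` lies in the linear span of the `conj(Xf e)`. -/
def IsOrthoVectorSet {n : ℕ} {F : Type} [CommGroupWithZero F] (t : TractOn F) (σ : F → F)
    (𝓥 : Set (OE n → F)) : Prop :=
  (∀ X Y : OE n → F, IsElem 𝓥 X → IsElem 𝓥 Y →
    (suppV X ∩ (suppV Y).image ostar).card ≤ 2 → OrthPair t σ X (starV Y)) ∧
  (∃ B : Finset (OE n), IsSupportBasis 𝓥 B) ∧
  (∀ B : Finset (OE n), IsSupportBasis 𝓥 B → ∃ Xf, IsFCF 𝓥 B Xf) ∧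
  (∀ X : OE n → F, X ∈ 𝓥 ↔
    ∀ (B : Finset (OE n)) (Xf : OE n → (OE n → F)), IsSupportBasis 𝓥 B → IsFCF 𝓥 B Xf →
      InSpanOver t (Finset.univ.filter (fun e => e ∉ B)) (fun e => conjV σ (Xf e))
        (conjV σ X))

section Aux


@[simp] lemma ostar_ostar {n : ℕ} (x : OE n) : ostar (ostar x) = x := by
  simp [ostar]

lemma ostar_injective {n : ℕ} : Function.Injective (ostar (n := n)) :=
  Function.LeftInverse.injective ostar_ostar

@[simp] lemma ostar_eq_iff {n : ℕ} {x y : OE n} : ostar x = ostar y ↔ x = y :=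
  ostar_injective.eq_iff

lemma ostar_ne_self {n : ℕ} (x : OE n) : ostar x ≠ x := by
  simp [ostar, Prod.ext_iff]

lemma ostar_eq_iff' {n : ℕ} {x y : OE n} : ostar x = y ↔ x = ostar y := by
  constructor <;> rintro rfl <;> simp

lemma mem_pairS {n : ℕ} {x y : OE n} : y ∈ pairS x ↔ y = x ∨ y = ostar x := by
  simp [pairS]

lemma pairS_ostar {n : ℕ} (x : OE n) : pairS (ostar x) = pairS x := by
  simp [pairS, Finset.pair_comm]

lemma admissible_subset {n : ℕ} {A B : Finset (OE n)} (h : IsAdmissible B) (hAB : A ⊆ B) :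
    IsAdmissible A := fun x hx hx' => h x (hAB hx) (hAB hx')

/-- For a transversal `B`: `e ∉ B ↔ ostar e ∈ B`. -/
lemma transversal_mem_iff {n : ℕ} {B : Finset (OE n)} (hB : IsTransversal B) (e : OE n) :
    e ∉ B ↔ ostar e ∈ B := by
  constructor
  · intro he
    by_contra hse
    -- B ∪ B.image ostar ∪ {e, ostar e} all disjoint would give card > 2n; instead count
    -- |B| + |B*| = 2n - ? ; use: B ∪ B* has card 2n ⇒ univ
    have hdisj : Disjoint B (B.image ostar) := by
      rw [Finset.disjoint_left]
      intro a ha ha'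
      obtain ⟨b, hb, rfl⟩ := Finset.mem_image.mp ha'
      exact hB.2 b hb ha
    have hcard : (B ∪ B.image ostar).card = 2 * n := by
      rw [Finset.card_union_of_disjoint hdisj, Finset.card_image_of_injective _ ostar_injective,
        hB.1]; ring
    have huniv : B ∪ B.image ostar = Finset.univ := by
      apply Finset.eq_univ_of_card
      rw [hcard]; simp [Fintype.card_prod]; ring
    have : e ∈ B ∪ B.image ostar := huniv ▸ Finset.mem_univ e
    rcases Finset.mem_union.mp this with h | h
    · exact he h
    · obtain ⟨b, hb, hbe⟩ := Finset.mem_image.mp h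
      rw [ostar_eq_iff'] at hbe
      exact hse (hbe ▸ hb)
  · intro hse he
    exact hB.2 e he hse

variable {F : Type} [CommGroupWithZero F] (t : TractOn F)


lemma eps_spec : t.eps ≠ 0 ∧ ({1, t.eps} : Multiset F) ∈ t.N :=
  t.eps_exists.exists.choose_spec

lemma eps_unique {x : F} (hx : x ≠ 0) (hm : ({1, x} : Multiset F) ∈ t.N) : x = t.eps := by
  obtain ⟨ε₀, hε₀, hun⟩ := t.eps_exists
  rw [hun x ⟨hx, hm⟩, hun t.eps (eps_spec t)]

lemma singleton_notMem (a : F) : ({a} : Multiset F) ∉ t.N := by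
  by_cases ha : a = 0
  · subst ha
    intro h
    exact t.not_zero_mem _ h (Multiset.mem_singleton_self 0)
  · intro h
    have := t.smul_mem a⁻¹ (inv_ne_zero ha) _ h
    simp [inv_mul_cancel₀ ha] at this
    exact t.one_not_mem this

lemma null_congr {s s' : Multiset F}
    (h : Multiset.filter (fun x => x ≠ 0) s = Multiset.filter (fun x => x ≠ 0) s') :
    t.Null s ↔ t.Null s' := by
  unfold TractOn.Null; rw [h]

lemma null_single {a : F} (h : t.Null {a}) : a = 0 := by
  by_contra ha
  rw [TractOn.Null, Multiset.filter_singleton, if_pos ha] at h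
  exact singleton_notMem t a h

lemma null_pair {a b : F} (h : t.Null {a, b}) : b = t.eps * a := by
  have hins : ({a, b} : Multiset F) = a ::ₘ {b} := rfl
  by_cases ha : a = 0
  · subst ha
    rw [TractOn.Null, hins, Multiset.filter_cons_of_neg _ (by simp)] at h
    have : b = 0 := null_single t h
    simp [this]
  · by_cases hb : b = 0
    · rw [TractOn.Null, hins, Multiset.filter_cons, if_pos ha, Multiset.filter_singleton,
        if_neg (by simpa using hb)] at h
      simp at h
      exact absurd h (singleton_notMem t a)
    · rw [TractOn.Null, hins, Multiset.filter_cons, if_pos ha, Multiset.filter_singleton,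
        if_pos hb] at h
      rw [show ({a} : Multiset F) + {b} = (a ::ₘ {b}) by rfl] at h
      have h2 := t.smul_mem a⁻¹ (inv_ne_zero ha) _ h
      have : Multiset.map (fun x => a⁻¹ * x) (a ::ₘ {b}) = ({1, a⁻¹ * b} : Multiset F) := by
        simp [inv_mul_cancel₀ ha]
      rw [this] at h2
      have heq := eps_unique t (by simp [ha, hb]) h2
      rw [← heq, mul_comm, ← mul_assoc, mul_inv_cancel₀ ha, one_mul]

lemma null_pair' {a b : F} (h : t.Null {a, b}) : a = t.eps * b := by
  have h' : t.Null {b, a} := by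
    rw [null_congr t (s' := ({a, b} : Multiset F))]
    · exact h
    · congr 1
      exact Multiset.cons_swap b a 0
  exact null_pair t h'

end Aux

section Aux2
variable {n : ℕ} {F : Type} [CommGroupWithZero F] {t : TractOn F} {σ : F → F}

lemma mem_suppV {X : OE n → F} {x : OE n} : x ∈ suppV X ↔ X x ≠ 0 := by
  simp [suppV]

lemma sigma_ne_zero (hσ : IsTractInvol t σ) {x : F} (hx : x ≠ 0) : σ x ≠ 0 := by
  intro h
  apply hx
  rw [← hσ.invol x, h, hσ.map_zero]

lemma conj_eq_zero (hσ : IsTractInvol t σ) {X : OE n → F} {x : OE n} :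
    conjV σ X x = 0 ↔ X x = 0 := by
  unfold conjV
  split
  · rfl
  · constructor
    · intro h
      by_contra hx
      exact sigma_ne_zero hσ hx h
    · intro h; rw [h, hσ.map_zero]

lemma suppV_conj (hσ : IsTractInvol t σ) (X : OE n → F) : suppV (conjV σ X) = suppV X := by
  ext x
  simp [mem_suppV, conj_eq_zero hσ]

/-- Helper: reduce a filtered multiset over a finset with one possibly-nonzero entry. -/
lemma null_reduce1 {ι : Type*} [DecidableEq ι] {S : Finset ι} {f : ι → F} {g : F} {a : ι}
    (ha : a ∈ S) (hz : ∀ i ∈ S, i ≠ a → f i = 0) :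
    t.Null (Multiset.map f S.val + {g}) ↔ t.Null {f a, g} := by
  apply null_congr
  have hSv : S.val = a ::ₘ (S.erase a).val := by
    rw [Finset.erase_val]
    exact (Multiset.cons_erase (show a ∈ S.val from ha)).symm
  have hrest : Multiset.filter (fun x => x ≠ 0) (Multiset.map f (S.erase a).val) = 0 := by
    rw [Multiset.filter_eq_nil]
    intro b hb
    obtain ⟨i, hi, rfl⟩ := Multiset.mem_map.mp hb
    have hi' : i ∈ S.erase a := hi
    rw [Finset.mem_erase] at hi'
    simp [hz i hi'.2 hi'.1]
  rw [hSv, Multiset.map_cons]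
  show Multiset.filter (fun x => x ≠ 0) (f a ::ₘ Multiset.map f (S.erase a).val + {g}) =
    Multiset.filter (fun x => x ≠ 0) (f a ::ₘ {g})
  rw [Multiset.filter_add, Multiset.filter_cons, Multiset.filter_cons, hrest]
  simp

lemma null_reduce2 {ι : Type*} [DecidableEq ι] {S : Finset ι} {f : ι → F} {g : F} {a b : ι}
    (ha : a ∈ S) (hb : b ∈ S) (hab : a ≠ b) (hz : ∀ i ∈ S, i ≠ a → i ≠ b → f i = 0) :
    t.Null (Multiset.map f S.val + {g}) ↔ t.Null {f a, f b, g} := by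
  apply null_congr
  have hb' : b ∈ S.erase a := Finset.mem_erase.mpr ⟨(Ne.symm hab), hb⟩
  have hSv : S.val = a ::ₘ b ::ₘ ((S.erase a).erase b).val := by
    have h1 : S.val = a ::ₘ (S.erase a).val := by
      rw [Finset.erase_val]
      exact (Multiset.cons_erase (show a ∈ S.val from ha)).symm
    have h2 : (S.erase a).val = b ::ₘ ((S.erase a).erase b).val := by
      rw [Finset.erase_val (S.erase a)]
      exact (Multiset.cons_erase (show b ∈ (S.erase a).val from hb')).symm
    rw [h1, h2]
  have hrest : Multiset.filter (fun x => x ≠ 0)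
      (Multiset.map f ((S.erase a).erase b).val) = 0 := by
    rw [Multiset.filter_eq_nil]
    intro y hy
    obtain ⟨i, hi, rfl⟩ := Multiset.mem_map.mp hy
    have hi' : i ∈ (S.erase a).erase b := hi
    rw [Finset.mem_erase, Finset.mem_erase] at hi'
    simp [hz i hi'.2.2 hi'.2.1 hi'.1]
  rw [hSv, Multiset.map_cons, Multiset.map_cons]
  show Multiset.filter (fun x => x ≠ 0)
      (f a ::ₘ f b ::ₘ Multiset.map f ((S.erase a).erase b).val + {g}) =
    Multiset.filter (fun x => x ≠ 0) (f a ::ₘ f b ::ₘ {g})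
  rw [Multiset.filter_add, Multiset.filter_cons, Multiset.filter_cons, Multiset.filter_cons,
    Multiset.filter_cons, hrest]
  simp [add_assoc]

end Aux2

section Aux3
variable {n : ℕ} {F : Type} [CommGroupWithZero F] {t : TractOn F} {σ : F → F}
  {𝓥 : Set (OE n → F)}

lemma symmDiff_pairS_eq {B : Finset (OE n)} (hB : IsTransversal B) {e : OE n} (he : e ∉ B) :
    symmDiff B (pairS e) = insert e (B.erase (ostar e)) := by
  have h1 : ostar e ∈ B := (transversal_mem_iff hB e).mp he
  ext z
  simp only [Finset.mem_symmDiff, mem_pairS, Finset.mem_insert, Finset.mem_erase]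
  constructor
  · rintro (⟨h2, h3⟩ | ⟨(rfl | rfl), h3⟩)
    · exact Or.inr ⟨fun hz => h3 (Or.inr hz), h2⟩
    · exact Or.inl rfl
    · exact absurd h1 h3
  · rintro (rfl | ⟨h2, h3⟩)
    · exact Or.inr ⟨Or.inl rfl, he⟩
    · refine Or.inl ⟨h3, fun hz => ?_⟩
      rcases hz with rfl | rfl
      · exact he h3
      · exact h2 rfl

lemma transversal_symmDiff_pairS {B : Finset (OE n)} (hB : IsTransversal B) {e : OE n}
    (he : e ∉ B) : IsTransversal (symmDiff B (pairS e)) := by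
  have h1 : ostar e ∈ B := (transversal_mem_iff hB e).mp he
  rw [symmDiff_pairS_eq hB he]
  constructor
  · rw [Finset.card_insert_of_notMem (fun h => he (Finset.mem_of_mem_erase h)),
      Finset.card_erase_of_mem h1, hB.1]
    have hn : 1 ≤ n := by
      rw [← hB.1]
      exact Finset.card_pos.mpr ⟨ostar e, h1⟩
    omega
  · intro x hx hsx
    rcases Finset.mem_insert.mp hx with rfl | hx'
    · rcases Finset.mem_insert.mp hsx with h | h
      · exact ostar_ne_self x h
      · exact (Finset.mem_erase.mp h).1 rfl
    · have hxB := Finset.mem_of_mem_erase hx'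
      rcases Finset.mem_insert.mp hsx with h | h
      · rw [ostar_eq_iff'] at h
        exact (Finset.mem_erase.mp hx').1 h
      · exact hB.2 x hxB (Finset.mem_of_mem_erase h)

lemma fcf_supp_cases {B : Finset (OE n)} {Xf : OE n → OE n → F} (hB : IsTransversal B)
    (hXf : IsFCF 𝓥 B Xf) {e : OE n} (he : e ∉ B) {z : OE n} (hz : z ∈ suppV (Xf e)) :
    z = e ∨ (z ∈ B ∧ z ≠ ostar e) := by
  have := (hXf e he).2.1 hz
  rw [symmDiff_pairS_eq hB he] at this
  rcases Finset.mem_insert.mp this with rfl | h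
  · exact Or.inl rfl
  · exact Or.inr ⟨Finset.mem_of_mem_erase h, (Finset.mem_erase.mp h).1⟩

lemma fcf_apply_eq_zero {B : Finset (OE n)} {Xf : OE n → OE n → F} (hB : IsTransversal B)
    (hXf : IsFCF 𝓥 B Xf) {e : OE n} (he : e ∉ B) {z : OE n} (hz1 : z ∉ B) (hz2 : z ≠ e) :
    Xf e z = 0 := by
  by_contra h
  rcases fcf_supp_cases hB hXf he (mem_suppV.mpr h) with rfl | ⟨h1, _⟩
  · exact hz2 rfl
  · exact hz1 h1

lemma fcf_apply_ostar {B : Finset (OE n)} {Xf : OE n → OE n → F} (hB : IsTransversal B)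
    (hXf : IsFCF 𝓥 B Xf) {e : OE n} (he : e ∉ B) : Xf e (ostar e) = 0 := by
  by_contra h
  rcases fcf_supp_cases hB hXf he (mem_suppV.mpr h) with h' | ⟨_, h2⟩
  · exact ostar_ne_self e h'
  · exact h2 rfl

lemma conj_fcf_self (hσ : IsTractInvol t σ) {B : Finset (OE n)} {Xf : OE n → OE n → F}
    (hXf : IsFCF 𝓥 B Xf) {e : OE n} (he : e ∉ B) : conjV σ (Xf e) e = 1 := by
  unfold conjV
  rw [(hXf e he).2.2]
  split
  · rfl
  · exact hσ.map_one

/-- The key computation: representation with forced (canonical) coefficients. -/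
lemma Lstar (hσ : IsTractInvol t σ) (h𝓥 : IsOrthoVectorSet t σ 𝓥) {B : Finset (OE n)}
    {Xf : OE n → OE n → F} (hB : IsSupportBasis 𝓥 B) (hXf : IsFCF 𝓥 B Xf)
    {X : OE n → F} (hX : X ∈ 𝓥) (x : OE n) :
    t.Null (Multiset.map (fun i => conjV σ X i * conjV σ (Xf i) x)
      (Finset.univ.filter (fun e => e ∉ B)).val + {t.eps * conjV σ X x}) := by
  obtain ⟨c, hc⟩ := (h𝓥.2.2.2 X).mp hX B Xf hB hXf
  beta_reduce at hc
  set S₀ : Finset (OE n) := Finset.univ.filter (fun e => e ∉ B) with hS₀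
  have hmemS₀ : ∀ i : OE n, i ∈ S₀ ↔ i ∉ B := by
    intro i; simp [hS₀]
  have hXfz : ∀ i ∈ S₀, ∀ j ∈ S₀, j ≠ i → conjV σ (Xf j) i = 0 := by
    intro i hi j hj hji
    rw [conj_eq_zero hσ]
    exact fcf_apply_eq_zero hB.1 hXf ((hmemS₀ j).mp hj) ((hmemS₀ i).mp hi) (Ne.symm hji)
  have hcX : ∀ i ∈ S₀, c i = conjV σ X i := by
    intro i hi
    have h := hc i
    rw [null_reduce1 (t := t) hi (fun j hj hji => by rw [hXfz i hi j hj hji, mul_zero])] at h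
    rw [conj_fcf_self hσ hXf ((hmemS₀ i).mp hi), mul_one] at h
    have h2 := null_pair t h
    exact (mul_left_cancel₀ (eps_spec t).1 h2).symm
  have hmapeq : Multiset.map (fun i => conjV σ X i * conjV σ (Xf i) x) S₀.val =
      Multiset.map (fun i => c i * conjV σ (Xf i) x) S₀.val :=
    Multiset.map_congr rfl (fun i hi => by rw [hcX i hi])
  rw [hmapeq]
  exact hc x

end Aux3

section Aux4
variable {n : ℕ} {F : Type} [CommGroupWithZero F] {t : TractOn F} {σ : F → F}
  {𝓥 : Set (OE n → F)}

lemma filter_map_all_zero {ι : Type*} {S : Multiset ι} {f : ι → F}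
    (hz : ∀ i ∈ S, f i = 0) :
    Multiset.filter (fun x => x ≠ 0) (Multiset.map f S) = 0 := by
  rw [Multiset.filter_eq_nil]
  intro b hb
  obtain ⟨i, hi, rfl⟩ := Multiset.mem_map.mp hb
  simp [hz i hi]

lemma filter_map_single {ι : Type*} [DecidableEq ι] {S : Finset ι} {f : ι → F} {a : ι}
    (ha : a ∈ S) (hz : ∀ i ∈ S, i ≠ a → f i = 0) :
    Multiset.filter (fun x => x ≠ 0) (Multiset.map f S.val) =
      Multiset.filter (fun x => x ≠ 0) {f a} := by
  have hSv : S.val = a ::ₘ (S.erase a).val := by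
    rw [Finset.erase_val]
    exact (Multiset.cons_erase (show a ∈ S.val from ha)).symm
  have hrest : ∀ i ∈ (S.erase a).val, f i = 0 := by
    intro i hi
    have hi' : i ∈ S.erase a := hi
    rw [Finset.mem_erase] at hi'
    exact hz i hi'.2 hi'.1
  rw [hSv, Multiset.map_cons, Multiset.filter_cons, filter_map_all_zero hrest,
    Multiset.filter_singleton]
  simp [Multiset.filter_cons]

/-- Rigidity: a vector of `𝓥` supported in `B ∪ {e}` is a multiple of `Xf e`. -/
lemma fcf_rigid (hσ : IsTractInvol t σ) (h𝓥 : IsOrthoVectorSet t σ 𝓥) {B : Finset (OE n)}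
    {Xf : OE n → OE n → F} (hB : IsSupportBasis 𝓥 B) (hXf : IsFCF 𝓥 B Xf)
    {e : OE n} (he : e ∉ B) {Y : OE n → F} (hY : Y ∈ 𝓥)
    (hYs : ∀ z, z ∉ B → z ≠ e → Y z = 0) (x : OE n) :
    conjV σ Y x = conjV σ Y e * conjV σ (Xf e) x := by
  have h := Lstar hσ h𝓥 hB hXf hY x
  have heS : e ∈ Finset.univ.filter (fun z : OE n => z ∉ B) := by simp [he]
  rw [null_reduce1 (t := t) heS (fun i hi hie => by
    have hYi : Y i = 0 := hYs i (by simpa using hi) hie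
    rw [(conj_eq_zero hσ).mpr hYi, zero_mul])] at h
  have h2 := null_pair t h
  exact mul_left_cancel₀ (eps_spec t).1 h2

/-- Each `Xf e` is elementary, and its support is contained in the support of any nonzero
member of `𝓥` supported in `B ∪ {e}`. -/
lemma fcf_supp_min (hσ : IsTractInvol t σ) (h𝓥 : IsOrthoVectorSet t σ 𝓥) {B : Finset (OE n)}
    {Xf : OE n → OE n → F} (hB : IsSupportBasis 𝓥 B) (hXf : IsFCF 𝓥 B Xf)
    {e : OE n} (he : e ∉ B) {Y : OE n → F} (hY : Y ∈ 𝓥) (hY0 : Y ≠ 0)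
    (hYs : ∀ z, z ∉ B → z ≠ e → Y z = 0) :
    Y e ≠ 0 ∧ suppV (Xf e) ⊆ suppV Y := by
  have hrig := fcf_rigid hσ h𝓥 hB hXf he hY hYs
  have hYe : Y e ≠ 0 := by
    intro hYe
    apply hY0
    funext x
    have := hrig x
    rw [show conjV σ Y e = 0 from (conj_eq_zero hσ).mpr hYe, zero_mul] at this
    exact (conj_eq_zero hσ).mp this
  refine ⟨hYe, fun x hx => ?_⟩
  rw [mem_suppV] at hx ⊢
  intro hYx
  have := hrig x
  rw [show conjV σ Y x = 0 from (conj_eq_zero hσ).mpr hYx] at this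
  rcases mul_eq_zero.mp this.symm with h | h
  · exact hYe ((conj_eq_zero hσ).mp h)
  · exact hx ((conj_eq_zero hσ).mp h)

lemma fcf_elem (hσ : IsTractInvol t σ) (h𝓥 : IsOrthoVectorSet t σ 𝓥) {B : Finset (OE n)}
    {Xf : OE n → OE n → F} (hB : IsSupportBasis 𝓥 B) (hXf : IsFCF 𝓥 B Xf)
    {e : OE n} (he : e ∉ B) : IsElem 𝓥 (Xf e) := by
  have hne : Xf e ≠ 0 := by
    intro h
    have := (hXf e he).2.2
    rw [h] at this
    exact one_ne_zero (show (0 : F) = 1 from this).symm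
  refine ⟨(hXf e he).1, hne, ?_, ?_⟩
  · exact admissible_subset (transversal_symmDiff_pairS hB.1 he).2 ((hXf e he).2.1)
  · intro Y hY hY0 hsub
    have hYs : ∀ z, z ∉ B → z ≠ e → Y z = 0 := by
      intro z hz1 hz2
      by_contra h
      rcases fcf_supp_cases hB.1 hXf he (hsub (mem_suppV.mpr h)) with rfl | ⟨h1, _⟩
      · exact hz2 rfl
      · exact hz1 h1
    exact Finset.Subset.antisymm hsub (fcf_supp_min hσ h𝓥 hB hXf he hY hY0 hYs).2

end Aux4

section Aux5
variable {n : ℕ} {F : Type} [CommGroupWithZero F] {t : TractOn F} {σ : F → F}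
  {𝓥 : Set (OE n → F)}

/-- Symmetry of fundamental circuits: if `b ∈ C(B,e) ∩ B` then `e* ∈ C(B,b*)`. -/
lemma fcf_symm (hσ : IsTractInvol t σ) (h𝓥 : IsOrthoVectorSet t σ 𝓥) {B : Finset (OE n)}
    {Xf : OE n → OE n → F} (hB : IsSupportBasis 𝓥 B) (hXf : IsFCF 𝓥 B Xf)
    {e : OE n} (he : e ∉ B) {b : OE n} (hb : b ∈ suppV (Xf e)) (hbB : b ∈ B) :
    ostar e ∈ suppV (Xf (ostar b)) := by
  have hsb : ostar b ∉ B := hB.1.2 b hbB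
  set X := Xf e with hX
  set Y := Xf (ostar b) with hY
  have hYval : Y (ostar b) = 1 := (hXf _ hsb).2.2
  have hI : ∀ z : OE n, X z ≠ 0 → Y (ostar z) ≠ 0 → z = b ∨ z = e := by
    intro z hz1 hz2
    rcases fcf_supp_cases hB.1 hXf he (mem_suppV.mpr hz1) with rfl | ⟨hzB, _⟩
    · exact Or.inr rfl
    · rcases fcf_supp_cases hB.1 hXf hsb (mem_suppV.mpr hz2) with h | ⟨h1, _⟩
      · exact Or.inl (ostar_injective h)
      · exact absurd h1 (hB.1.2 z hzB)
  have hsub : suppV X ∩ (suppV Y).image ostar ⊆ {b, e} := by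
    intro z hz
    rw [Finset.mem_inter] at hz
    obtain ⟨hz1, hz2⟩ := hz
    obtain ⟨w, hw, hwz⟩ := Finset.mem_image.mp hz2
    have hz3 : Y (ostar z) ≠ 0 := by
      rw [← hwz, ostar_ostar]
      exact mem_suppV.mp hw
    rcases hI z (mem_suppV.mp hz1) hz3 with rfl | rfl
    · exact Finset.mem_insert_self _ _
    · exact Finset.mem_insert_of_mem (Finset.mem_singleton_self _)
  have hcard : (suppV X ∩ (suppV Y).image ostar).card ≤ 2 :=
    le_trans (Finset.card_le_card hsub)
      (le_trans (Finset.card_insert_le b {e}) (by simp))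
  have hO := h𝓥.1 X Y (fcf_elem hσ h𝓥 hB hXf he) (fcf_elem hσ h𝓥 hB hXf hsb) hcard
  by_contra hcon
  have hYe : Y (ostar e) = 0 := by
    by_contra h
    exact hcon (mem_suppV.mpr h)
  have hI' : ∀ z : OE n, X z ≠ 0 → Y (ostar z) ≠ 0 → z = b := by
    intro z h1 h2
    rcases hI z h1 h2 with rfl | rfl
    · rfl
    · exact absurd hYe h2
  have hXb : X b ≠ 0 := mem_suppV.mp hb
  have hYsb : Y (ostar b) ≠ 0 := by
    rw [hYval]; exact one_ne_zero
  unfold OrthPair at hO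
  rw [TractOn.Null, innerTerms, Multiset.filter_add] at hO
  have hfz : ∀ i : Fin n, X (i, true) * σ (starV Y (i, true)) ≠ 0 → ((i, true) : OE n) = b := by
    intro i hf
    have h1 : X (i, true) ≠ 0 := fun h => hf (by rw [h, zero_mul])
    have h2 : Y (ostar ((i, true) : OE n)) ≠ 0 := by
      intro h
      apply hf
      have hsv : starV Y ((i, true) : OE n) = Y (ostar ((i, true) : OE n)) := rfl
      rw [hsv, h, hσ.map_zero, mul_zero]
    exact hI' (i, true) h1 h2
  have hgz : ∀ i : Fin n, σ (X (i, false)) * starV Y (i, false) ≠ 0 →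
      ((i, false) : OE n) = b := by
    intro i hg
    have h1 : X (i, false) ≠ 0 := by
      intro h
      apply hg
      rw [h, hσ.map_zero, zero_mul]
    have h2 : Y (ostar ((i, false) : OE n)) ≠ 0 := by
      intro h
      apply hg
      have hsv : starV Y ((i, false) : OE n) = Y (ostar ((i, false) : OE n)) := rfl
      rw [hsv, h, mul_zero]
    exact hI' (i, false) h1 h2
  obtain ⟨b1, b2⟩ := b
  cases b2
  · -- b = (b1, false): the f-side is all zero, g-side a single nonzero term
    have hf0 : Multiset.filter (fun x => x ≠ 0)
        (Multiset.map (fun i : Fin n => X (i, true) * σ (starV Y (i, true)))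
          Finset.univ.val) = 0 :=
      filter_map_all_zero (fun i _ => by
        by_contra h
        exact Bool.noConfusion (Prod.ext_iff.mp (hfz i h)).2)
    have hg1 : Multiset.filter (fun x => x ≠ 0)
        (Multiset.map (fun i : Fin n => σ (X (i, false)) * starV Y (i, false))
          Finset.univ.val) =
        Multiset.filter (fun x => x ≠ 0) {σ (X (b1, false)) * starV Y (b1, false)} :=
      filter_map_single (Finset.mem_univ b1) (fun i _ hib => by
        by_contra h
        exact hib (Prod.ext_iff.mp (hgz i h)).1)
    have hval : σ (X (b1, false)) * starV Y (b1, false) ≠ 0 := by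
      apply mul_ne_zero
      · exact sigma_ne_zero hσ hXb
      · exact hYsb
    rw [hf0, hg1, Multiset.filter_singleton, if_pos hval, zero_add] at hO
    exact singleton_notMem t _ hO
  · -- b = (b1, true): the g-side is all zero, f-side a single nonzero term
    have hg0 : Multiset.filter (fun x => x ≠ 0)
        (Multiset.map (fun i : Fin n => σ (X (i, false)) * starV Y (i, false))
          Finset.univ.val) = 0 :=
      filter_map_all_zero (fun i _ => by
        by_contra h
        exact Bool.noConfusion (Prod.ext_iff.mp (hgz i h)).2)
    have hf1 : Multiset.filter (fun x => x ≠ 0)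
        (Multiset.map (fun i : Fin n => X (i, true) * σ (starV Y (i, true)))
          Finset.univ.val) =
        Multiset.filter (fun x => x ≠ 0) {X (b1, true) * σ (starV Y (b1, true))} :=
      filter_map_single (Finset.mem_univ b1) (fun i _ hib => by
        by_contra h
        exact hib (Prod.ext_iff.mp (hfz i h)).1)
    have hval : X (b1, true) * σ (starV Y (b1, true)) ≠ 0 := by
      apply mul_ne_zero
      · exact hXb
      · exact sigma_ne_zero hσ hYsb
    rw [hg0, hf1, Multiset.filter_singleton, if_pos hval, add_zero] at hO
    exact singleton_notMem t _ hO

end Aux5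

section Aux6
variable {n : ℕ} {F : Type} [CommGroupWithZero F] {t : TractOn F} {σ : F → F}
  {𝓥 : Set (OE n → F)}

lemma null_triple_first (t : TractOn F) {u v w : F} (h : t.Null {u, v, w}) (hu : u = 0) :
    t.Null {v, w} := by
  refine (null_congr t ?_).mp h
  subst hu
  show Multiset.filter (fun x => x ≠ 0) ((0 : F) ::ₘ v ::ₘ {w}) =
    Multiset.filter (fun x => x ≠ 0) (v ::ₘ {w})
  simp [Multiset.filter_cons]

lemma null_triple_mid (t : TractOn F) {u v w : F} (h : t.Null {u, v, w}) (hv : v = 0) :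
    t.Null {u, w} := by
  refine (null_congr t ?_).mp h
  subst hv
  show Multiset.filter (fun x => x ≠ 0) (u ::ₘ (0 : F) ::ₘ {w}) =
    Multiset.filter (fun x => x ≠ 0) (u ::ₘ {w})
  simp [Multiset.filter_cons]

lemma exchange_mem {B : Finset (OE n)} (hB : IsTransversal B) {e : OE n} (he : e ∉ B)
    {b : OE n} (hbB : b ∈ B) (hbse : b ≠ ostar e) (z : OE n) :
    z ∈ symmDiff (symmDiff B (pairS e)) (pairS b) ↔
      z = ostar b ∨ z = e ∨ (z ∈ B ∧ z ≠ ostar e ∧ z ≠ b) := by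
  have hbe : b ≠ e := fun h => he (h ▸ hbB)
  have hB₁ : IsTransversal (symmDiff B (pairS e)) := transversal_symmDiff_pairS hB he
  have hbB₁ : b ∈ symmDiff B (pairS e) := by
    rw [symmDiff_pairS_eq hB he]
    exact Finset.mem_insert_of_mem (Finset.mem_erase.mpr ⟨hbse, hbB⟩)
  have hsbB₁ : ostar b ∉ symmDiff B (pairS e) := hB₁.2 b hbB₁
  rw [← pairS_ostar b, symmDiff_pairS_eq hB₁ hsbB₁, symmDiff_pairS_eq hB he]
  rw [ostar_ostar]
  simp only [Finset.mem_insert, Finset.mem_erase]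
  constructor
  · rintro (rfl | ⟨hzb, (rfl | ⟨h1, h2⟩)⟩)
    · exact Or.inl rfl
    · exact Or.inr (Or.inl rfl)
    · exact Or.inr (Or.inr ⟨h2, h1, hzb⟩)
  · rintro (rfl | rfl | ⟨h1, h2, h3⟩)
    · exact Or.inl rfl
    · exact Or.inr ⟨hbe.symm, Or.inl rfl⟩
    · exact Or.inr ⟨h3, Or.inr ⟨h2, h1⟩⟩

/-- The fundamental exchange: swapping `e` in and `b ∈ C(B,e) ∩ B` out of a support basis
gives a support basis. -/
lemma exchange_basis (hσ : IsTractInvol t σ) (h𝓥 : IsOrthoVectorSet t σ 𝓥) {B : Finset (OE n)}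
    {Xf : OE n → OE n → F} (hB : IsSupportBasis 𝓥 B) (hXf : IsFCF 𝓥 B Xf)
    {e : OE n} (he : e ∉ B) {b : OE n} (hb : b ∈ suppV (Xf e)) (hbB : b ∈ B) :
    IsSupportBasis 𝓥 (symmDiff (symmDiff B (pairS e)) (pairS b)) := by
  have hbe : b ≠ e := fun h => he (h ▸ hbB)
  have hbse : b ≠ ostar e := by
    rcases fcf_supp_cases hB.1 hXf he hb with rfl | ⟨_, h2⟩
    · exact absurd hbB he
    · exact h2
  have hsb : ostar b ∉ B := hB.1.2 b hbB
  have hese : e ≠ ostar b := fun h => hbse (by rw [h, ostar_ostar])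
  set B' := symmDiff (symmDiff B (pairS e)) (pairS b) with hB'
  have hmem0 := exchange_mem hB.1 he hbB hbse
  have htrans : IsTransversal B' := by
    have hB₁ : IsTransversal (symmDiff B (pairS e)) := transversal_symmDiff_pairS hB.1 he
    have hbB₁ : b ∈ symmDiff B (pairS e) := by
      rw [symmDiff_pairS_eq hB.1 he]
      exact Finset.mem_insert_of_mem (Finset.mem_erase.mpr ⟨hbse, hbB⟩)
    have hsbB₁ : ostar b ∉ symmDiff B (pairS e) := hB₁.2 b hbB₁
    rw [hB', ← pairS_ostar b]
    exact transversal_symmDiff_pairS hB₁ hsbB₁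
  have hmem : ∀ z, z ∈ B' ↔ z = ostar b ∨ z = e ∨ (z ∈ B ∧ z ≠ ostar e ∧ z ≠ b) := by
    intro z
    rw [hB']
    exact hmem0 z
  refine ⟨htrans, ?_⟩
  intro Y hY hY0 hsupp
  apply hY0
  have hYnotB' : ∀ z, z ∉ B' → Y z = 0 := by
    intro z hz
    by_contra h
    exact hz (hsupp (mem_suppV.mpr h))
  -- membership facts
  have heS : e ∈ Finset.univ.filter (fun z : OE n => z ∉ B) := by simp [he]
  have hsbS : ostar b ∈ Finset.univ.filter (fun z : OE n => z ∉ B) := by simp [hsb]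
  -- reduced representation
  have hred : ∀ x, t.Null {conjV σ Y e * conjV σ (Xf e) x,
      conjV σ Y (ostar b) * conjV σ (Xf (ostar b)) x, t.eps * conjV σ Y x} := by
    intro x
    have h := Lstar hσ h𝓥 hB hXf hY x
    rw [null_reduce2 (t := t) heS hsbS hese (fun i hi hie hisb => ?_)] at h
    · exact h
    · have hiB : i ∉ B := by simpa using hi
      have hYi : Y i = 0 := by
        apply hYnotB' i
        intro hiB'
        rcases (hmem i).mp hiB' with rfl | rfl | ⟨h1, _, _⟩
        · exact hisb rfl
        · exact hie rfl
        · exact hiB h1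
      rw [(conj_eq_zero hσ).mpr hYi, zero_mul]
  -- step 1 : Y e = 0
  have hYb : Y b = 0 := by
    apply hYnotB' b
    intro hbB'
    rcases (hmem b).mp hbB' with h | h | ⟨_, _, h3⟩
    · exact ostar_ne_self b h.symm
    · exact hbe h
    · exact h3 rfl
  have hXfb : Xf (ostar b) b = 0 := by
    have := fcf_apply_ostar hB.1 hXf hsb
    rwa [ostar_ostar] at this
  have hYe : Y e = 0 := by
    have h1 := null_triple_mid t (hred b) (by rw [(conj_eq_zero hσ).mpr hXfb, mul_zero])
    have h2 := null_pair t h1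
    rw [(conj_eq_zero hσ).mpr hYb, mul_zero] at h2
    rcases mul_eq_zero.mp h2.symm with h | h
    · exact absurd h (eps_spec t).1
    · rcases mul_eq_zero.mp h with h' | h'
      · exact (conj_eq_zero hσ).mp h'
      · exact absurd ((conj_eq_zero hσ).mp h') (mem_suppV.mp hb)
  -- step 2 : Y (ostar b) = 0
  have hYse : Y (ostar e) = 0 := by
    apply hYnotB' (ostar e)
    intro hseB'
    rcases (hmem (ostar e)).mp hseB' with h | h | ⟨_, h2, _⟩
    · exact hbe (ostar_injective h).symm
    · exact ostar_ne_self e h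
    · exact h2 rfl
  have hXfse : Xf (ostar b) (ostar e) ≠ 0 :=
    mem_suppV.mp (fcf_symm hσ h𝓥 hB hXf he hb hbB)
  have hYsb : Y (ostar b) = 0 := by
    have h1 := null_triple_first t (hred (ostar e))
      (by rw [(conj_eq_zero hσ).mpr hYe, zero_mul])
    have h2 := null_pair t h1
    rw [(conj_eq_zero hσ).mpr hYse, mul_zero] at h2
    rcases mul_eq_zero.mp h2.symm with h | h
    · exact absurd h (eps_spec t).1
    · rcases mul_eq_zero.mp h with h' | h'
      · exact (conj_eq_zero hσ).mp h'
      · exact absurd ((conj_eq_zero hσ).mp h') hXfse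
  -- step 3 : Y = 0
  funext x
  have h1 := null_triple_first t (hred x) (by rw [(conj_eq_zero hσ).mpr hYe, zero_mul])
  have h2 := null_pair t h1
  rw [(conj_eq_zero hσ).mpr hYsb, zero_mul, mul_zero] at h2
  rcases mul_eq_zero.mp h2 with h | h
  · exact absurd h (eps_spec t).1
  · exact (conj_eq_zero hσ).mp h

end Aux6

section Aux7
variable {n : ℕ} {F : Type} [CommGroupWithZero F] {t : TractOn F} {σ : F → F}
  {𝓥 : Set (OE n → F)}

/-- Augmentation: a `𝓥`-independent admissible set extends to a support basis. -/
lemma indep_extends (hσ : IsTractInvol t σ) (h𝓥 : IsOrthoVectorSet t σ 𝓥)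
    {D : Finset (OE n)} (hD : IsAdmissible D)
    (hind : ∀ X ∈ 𝓥, X ≠ 0 → ¬ suppV X ⊆ D) :
    ∃ B, IsSupportBasis 𝓥 B ∧ D ⊆ B := by
  classical
  obtain ⟨B₀, hB₀⟩ := h𝓥.2.1
  set 𝓕 : Finset (Finset (OE n)) := Finset.univ.filter (fun B => IsSupportBasis 𝓥 B) with h𝓕
  have hne : 𝓕.Nonempty := ⟨B₀, by simp [h𝓕, hB₀]⟩
  obtain ⟨B, hBmem, hBmax⟩ := Finset.exists_max_image 𝓕 (fun B => (B ∩ D).card) hne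
  have hB : IsSupportBasis 𝓥 B := by
    rw [h𝓕] at hBmem
    simpa using hBmem
  refine ⟨B, hB, ?_⟩
  by_contra hDB
  obtain ⟨d, hdD, hdB⟩ := Finset.not_subset.mp hDB
  obtain ⟨Xf, hXf⟩ := h𝓥.2.2.1 B hB
  have hXd : Xf d ∈ 𝓥 := (hXf d hdB).1
  have hne0 : Xf d ≠ 0 := (fcf_elem hσ h𝓥 hB hXf hdB).2.1
  obtain ⟨b, hbsupp, hbD⟩ := Finset.not_subset.mp (hind (Xf d) hXd hne0)
  have hbd : b ≠ d := fun h => hbD (h ▸ hdD)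
  have hbB : b ∈ B := by
    rcases fcf_supp_cases hB.1 hXf hdB hbsupp with rfl | ⟨h1, _⟩
    · exact absurd rfl hbd
    · exact h1
  have hbsd : b ≠ ostar d := by
    rcases fcf_supp_cases hB.1 hXf hdB hbsupp with rfl | ⟨_, h2⟩
    · exact absurd rfl hbd
    · exact h2
  have hB' := exchange_basis hσ h𝓥 hB hXf hdB hbsupp hbB
  set B' := symmDiff (symmDiff B (pairS d)) (pairS b) with hB'def
  have hmem := exchange_mem hB.1 hdB hbB hbsd
  have hB'𝓕 : B' ∈ 𝓕 := by
    rw [h𝓕]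
    simp only [Finset.mem_filter, Finset.mem_univ, true_and]
    exact hB'
  have hsub : B ∩ D ⊆ B' ∩ D := by
    intro z hz
    rw [Finset.mem_inter] at hz ⊢
    refine ⟨?_, hz.2⟩
    rw [hmem z]
    refine Or.inr (Or.inr ⟨hz.1, ?_, ?_⟩)
    · intro h
      exact hD d hdD (h ▸ hz.2)
    · intro h
      exact hbD (h ▸ hz.2)
  have hd' : d ∈ B' ∩ D := by
    rw [Finset.mem_inter, hmem d]
    exact ⟨Or.inr (Or.inl rfl), hdD⟩
  have hd'' : d ∉ B ∩ D := fun h => hdB (Finset.mem_inter.mp h).1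
  have hlt : (B ∩ D).card < (B' ∩ D).card :=
    Finset.card_lt_card (Finset.ssubset_iff_of_subset hsub |>.mpr ⟨d, hd', hd''⟩)
  exact absurd (hBmax B' hB'𝓕) (not_le.mpr hlt)

/-- Half of the symmetric exchange axiom, for `x' ∈ B₁ \ B₂`. -/
lemma exchange_main (hσ : IsTractInvol t σ) (h𝓥 : IsOrthoVectorSet t σ 𝓥)
    {B₁ B₂ : Finset (OE n)} (hB₁ : IsSupportBasis 𝓥 B₁) (hB₂ : IsSupportBasis 𝓥 B₂)
    {x' : OE n} (hx1 : x' ∈ B₁) (hx2 : x' ∉ B₂) :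
    ∃ y : OE n, y ∈ symmDiff B₁ B₂ ∧ ostar y ∈ symmDiff B₁ B₂ ∧
      pairS y ≠ pairS x' ∧ IsSupportBasis 𝓥 (symmDiff B₁ (pairS x' ∪ pairS y)) := by
  have he : ostar x' ∉ B₁ := hB₁.1.2 x' hx1
  have heB₂ : ostar x' ∈ B₂ := (transversal_mem_iff hB₂.1 x').mp hx2
  obtain ⟨Xf, hXf⟩ := h𝓥.2.2.1 B₁ hB₁
  have hXe : Xf (ostar x') ∈ 𝓥 := (hXf _ he).1
  have hne0 : Xf (ostar x') ≠ 0 := (fcf_elem hσ h𝓥 hB₁ hXf he).2.1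
  obtain ⟨y, hysupp, hyB₂⟩ := Finset.not_subset.mp (hB₂.2 _ hXe hne0)
  have hye : y ≠ ostar x' := fun h => hyB₂ (h ▸ heB₂)
  have hyB₁ : y ∈ B₁ := by
    rcases fcf_supp_cases hB₁.1 hXf he hysupp with rfl | ⟨h1, _⟩
    · exact absurd rfl hye
    · exact h1
  have hyx : y ≠ x' := by
    rcases fcf_supp_cases hB₁.1 hXf he hysupp with rfl | ⟨_, h2⟩
    · exact absurd rfl hye
    · rw [ostar_ostar] at h2
      exact h2
  refine ⟨y, ?_, ?_, ?_, ?_⟩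
  · rw [Finset.mem_symmDiff]
    exact Or.inl ⟨hyB₁, hyB₂⟩
  · rw [Finset.mem_symmDiff]
    exact Or.inr ⟨(transversal_mem_iff hB₂.1 y).mp hyB₂, hB₁.1.2 y hyB₁⟩
  · intro h
    have : y ∈ pairS x' := h ▸ Finset.mem_insert_self y {ostar y}
    rcases mem_pairS.mp this with h' | h'
    · exact hyx h'
    · exact hye h'
  · have hbasis := exchange_basis hσ h𝓥 hB₁ hXf he hysupp hyB₁
    have hdisj : Disjoint (pairS (ostar x')) (pairS y) := by
      rw [Finset.disjoint_left]
      intro a ha ha'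
      rcases mem_pairS.mp ha with h1 | h1
      · rcases mem_pairS.mp ha' with h2 | h2
        · exact hye (h2.symm.trans h1)
        · exact hyx (ostar_injective (h1.symm.trans h2).symm)
      · have h1' : a = x' := by rw [h1, ostar_ostar]
        rcases mem_pairS.mp ha' with h2 | h2
        · exact hyx (h2.symm.trans h1')
        · exact hye (ostar_eq_iff'.mp (h1'.symm.trans h2).symm)
    have hun : pairS x' ∪ pairS y = symmDiff (pairS (ostar x')) (pairS y) := by
      rw [hdisj.symmDiff_eq_sup, pairS_ostar]
      rfl
    rw [hun, ← symmDiff_assoc]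
    exact hbasis

end Aux7

/-- The support bases of an orthogonal `F`-vector set `𝓥` form the bases of an orthogonal
matroid, whose circuits are exactly the supports of the elementary vectors of `𝓥`. -/
theorem orthoVectorSet_supportBases {n : ℕ} {F : Type} [CommGroupWithZero F]
    (t : TractOn F) (σ : F → F) (hσ : IsTractInvol t σ)
    (𝓥 : Set (OE n → F)) (h𝓥 : IsOrthoVectorSet t σ 𝓥) :
    IsOrthoMatroid {B | IsSupportBasis 𝓥 B} ∧
    ∀ C : Finset (OE n),
      IsCircuit {B | IsSupportBasis 𝓥 B} C ↔ ∃ X : OE n → F, IsElem 𝓥 X ∧ suppV X = C := by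
  classical
  -- elementary vectors give circuits
  have hcirc : ∀ X : OE n → F, IsElem 𝓥 X →
      IsCircuit {B | IsSupportBasis 𝓥 B} (suppV X) := by
    intro X hX
    refine ⟨hX.2.2.1, ?_, ?_⟩
    · rintro ⟨B, hB, hsub⟩
      exact hB.2 X hX.1 hX.2.1 hsub
    · intro D hD
      have hDadm : IsAdmissible D := admissible_subset hX.2.2.1 hD.subset
      have hind : ∀ Y ∈ 𝓥, Y ≠ 0 → ¬ suppV Y ⊆ D := by
        intro Y hY hY0 hsub
        have heq := hX.2.2.2 Y hY hY0 (hsub.trans hD.subset)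
        rw [heq] at hsub
        exact hD.not_subset hsub
      obtain ⟨B, hB, hDB⟩ := indep_extends hσ h𝓥 hDadm hind
      exact ⟨B, hB, hDB⟩
  constructor
  · refine ⟨h𝓥.2.1, fun B hB => hB.1, ?_⟩
    intro B₁ hB₁ B₂ hB₂ x hx hsx
    rw [Set.mem_setOf_eq] at hB₁ hB₂
    rcases Finset.mem_symmDiff.mp hx with ⟨hx1, hx2⟩ | ⟨hx1, hx2⟩
    · exact exchange_main hσ h𝓥 hB₁ hB₂ hx1 hx2
    · have hx1' : ostar x ∈ B₁ := by
        rcases Finset.mem_symmDiff.mp hsx with ⟨h1, _⟩ | ⟨h1, h2⟩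
        · exact h1
        · exact absurd ((transversal_mem_iff hB₁.1 x).mp hx2) h2
      have hx2' : ostar x ∉ B₂ := hB₂.1.2 x hx1
      obtain ⟨y, h1, h2, h3, h4⟩ := exchange_main hσ h𝓥 hB₁ hB₂ hx1' hx2'
      exact ⟨y, h1, h2, by rwa [pairS_ostar] at h3, by rwa [pairS_ostar] at h4⟩
  · intro C
    constructor
    · rintro ⟨hCadm, hCdep, hCmin⟩
      have hex : ¬ ∀ X ∈ 𝓥, X ≠ 0 → ¬ suppV X ⊆ C := by
        intro h
        obtain ⟨B, hB, hCB⟩ := indep_extends hσ h𝓥 hCadm h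
        exact hCdep ⟨B, hB, hCB⟩
      push_neg at hex
      obtain ⟨X₀, hX₀v, hX₀0, hX₀s⟩ := hex
      -- choose such a vector of minimal support size
      have hkey : ∃ k : ℕ, ∃ X : OE n → F,
          (X ∈ 𝓥 ∧ X ≠ 0 ∧ suppV X ⊆ C) ∧ (suppV X).card = k :=
        ⟨(suppV X₀).card, X₀, ⟨hX₀v, hX₀0, hX₀s⟩, rfl⟩
      obtain ⟨X, ⟨hXv, hX0, hXs⟩, hXcard⟩ := Nat.find_spec hkey
      have hXelem : IsElem 𝓥 X := by
        refine ⟨hXv, hX0, admissible_subset hCadm hXs, ?_⟩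
        intro Y hY hY0 hsub
        have hYk : Nat.find hkey ≤ (suppV Y).card := by
          apply Nat.find_le
          exact ⟨Y, ⟨hY, hY0, hsub.trans hXs⟩, rfl⟩
        rw [← hXcard] at hYk
        exact Finset.eq_of_subset_of_card_le hsub hYk
      refine ⟨X, hXelem, ?_⟩
      by_contra hne
      have hss : suppV X ⊂ C := lt_of_le_of_ne hXs hne
      obtain ⟨B, hB, hsub⟩ := hCmin (suppV X) hss
      exact hB.2 X hXv hX0 hsub
    · rintro ⟨X, hX, rfl⟩
      exact hcirc X hX
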